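/- If V : ℝ^d → ℝ is C², convex, with min V > 0 and satisfies the KL condition c·V(θ)^{-r} ≤ λ_min(∇²V(θ)) for 0 ≤ r < 1, then for all θ: V(θ)^{1+r} - (min V)^{1+r} ≥ ((1+r)c/2)·‖θ - θ*‖², where θ* is the minimizer of V. -/

import Mathlib

/-!
Restrict to the segment `t ↦ θ* + t (θ - θ*)` and let `φ` be `V` along it. The KL condition
bounds `φ''` below by `c φ^{-r} ‖θ - θ*‖²`, and since `φ > 0` and `r ≥ 0` the extra term
`r (1 + r) φ^{r-1} φ'²` in `(φ^{1+r})''` is nonnegative, so `(φ^{1+r})'' ≥ (1 + r) c ‖θ - θ*‖²`.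
As `φ'(0) = 0` at the minimiser, the second-order Taylor lower bound between `0` and `1` gives
the claim.
-/

open Real

theorem ConvexOn.add_mul_sub_le_of_hasDerivAt {S : Set ℝ} {f : ℝ → ℝ} {f' x y : ℝ}
    (hf : ConvexOn ℝ S f) (hx : x ∈ S) (hy : y ∈ S) (hf' : HasDerivAt f f' x) :
    f x + f' * (y - x) ≤ f y := by
  rcases lt_trichotomy x y with hxy | rfl | hyx
  · have := hf.le_slope_of_hasDerivAt hx hy hxy hf'
    rw [slope_def_field, le_div_iff₀ (sub_pos.mpr hxy)] at this
    linarith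
  · simp
  · have := hf.slope_le_of_hasDerivAt hy hx hyx hf'
    rw [slope_def_field, div_le_iff₀ (sub_pos.mpr hyx)] at this
    linarith

theorem add_mul_sub_add_sq_le_of_le_deriv2 {g g' g'' : ℝ → ℝ} {K : ℝ}
    (hg : ∀ t, HasDerivAt g (g' t) t) (hg' : ∀ t, HasDerivAt g' (g'' t) t)
    (hK : ∀ t, K ≤ g'' t) (a b : ℝ) :
    g a + g' a * (b - a) + K / 2 * (b - a) ^ 2 ≤ g b := by
  have hF : ∀ t, HasDerivAt (fun s => g s - K / 2 * s ^ 2) (g' t - K * t) t := fun t =>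
    ((hg t).fun_sub ((hasDerivAt_pow 2 t).const_mul (K / 2))).congr_deriv (by push_cast; ring)
  have hF' : ∀ t, HasDerivAt (fun s => g' s - K * s) (g'' t - K) t := fun t => by
    simpa using (hg' t).fun_sub ((hasDerivAt_id' t).const_mul K)
  have hconv : ConvexOn ℝ Set.univ (fun s => g s - K / 2 * s ^ 2) :=
    convexOn_of_hasDerivWithinAt2_nonneg convex_univ
      (continuous_iff_continuousAt.mpr fun t => (hF t).continuousAt).continuousOn
      (fun t _ => (hF t).hasDerivWithinAt) (fun t _ => (hF' t).hasDerivWithinAt)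
      (fun t _ => sub_nonneg.mpr (hK t))
  have := hconv.add_mul_sub_le_of_hasDerivAt (Set.mem_univ a) (Set.mem_univ b) (hF a)
  linear_combination this

theorem one_add_mul_le_deriv2_rpow_one_add {x p q r c M : ℝ} (hx : 0 < x) (hr : 0 ≤ r)
    (hq : c * x ^ (-r) * M ≤ q) :
    (1 + r) * c * M ≤ q * ((1 + r) * x ^ r) + p * ((1 + r) * (p * r * x ^ (r - 1))) := by
  have hxr : x ^ (-r) * x ^ r = 1 := by rw [← rpow_add hx]; simp
  have hmain : (1 + r) * c * M ≤ q * ((1 + r) * x ^ r) := by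
    calc (1 + r) * c * M = c * x ^ (-r) * M * ((1 + r) * x ^ r) := by
          linear_combination (-(1 + r) * c * M) * hxr
      _ ≤ q * ((1 + r) * x ^ r) := by gcongr
  have hrest : 0 ≤ p * ((1 + r) * (p * r * x ^ (r - 1))) := by
    have : 0 ≤ (1 + r) * r * x ^ (r - 1) * p ^ 2 := by positivity
    linarith
  linarith

theorem rpow_one_add_add_sq_le_of_le_deriv2 {φ φ' φ'' : ℝ → ℝ} {r c M : ℝ} (hr : 0 ≤ r)
    (hφpos : ∀ t, 0 < φ t) (hφ : ∀ t, HasDerivAt φ (φ' t) t)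
    (hφ' : ∀ t, HasDerivAt φ' (φ'' t) t) (hKL : ∀ t, c * φ t ^ (-r) * M ≤ φ'' t)
    {a : ℝ} (ha : φ' a = 0) (b : ℝ) :
    φ a ^ (1 + r) + (1 + r) * c * M / 2 * (b - a) ^ 2 ≤ φ b ^ (1 + r) := by
  have hg : ∀ t, HasDerivAt (fun s => φ s ^ (1 + r)) (φ' t * ((1 + r) * φ t ^ r)) t := fun t => by
    simpa [mul_assoc] using (hφ t).rpow_const (p := 1 + r) (Or.inl (hφpos t).ne')
  have hg' : ∀ t, HasDerivAt (fun s => φ' s * ((1 + r) * φ s ^ r))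
      (φ'' t * ((1 + r) * φ t ^ r) + φ' t * ((1 + r) * (φ' t * r * φ t ^ (r - 1)))) t :=
    fun t => (hφ' t).mul (((hφ t).rpow_const (Or.inl (hφpos t).ne')).const_mul (1 + r))
  have := add_mul_sub_add_sq_le_of_le_deriv2 hg hg'
    (fun t => one_add_mul_le_deriv2_rpow_one_add (hφpos t) hr (hKL t)) a b
  simpa [ha, mul_div_right_comm] using this

section Segment

variable {E F : Type*} [NormedAddCommGroup E] [NormedSpace ℝ E]
  [NormedAddCommGroup F] [NormedSpace ℝ F] {f : E → F} {x u : E} {t : ℝ}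

theorem hasDerivAt_comp_add_smul (hf : DifferentiableAt ℝ f (x + t • u)) :
    HasDerivAt (fun s : ℝ => f (x + s • u)) (fderiv ℝ f (x + t • u) u) t := by
  have hline : HasDerivAt (fun s : ℝ => x + s • u) u t := by
    simpa using ((hasDerivAt_id t).smul_const u).const_add x
  exact hf.hasFDerivAt.comp_hasDerivAt t hline

theorem hasDerivAt_fderiv_comp_add_smul (hf : DifferentiableAt ℝ (fderiv ℝ f) (x + t • u)) :
    HasDerivAt (fun s : ℝ => fderiv ℝ f (x + s • u) u) (fderiv ℝ (fderiv ℝ f) (x + t • u) u u) t :=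
  (ContinuousLinearMap.apply ℝ F u).hasFDerivAt.comp_hasDerivAt t (hasDerivAt_comp_add_smul hf)

end Segment

theorem stmt2_general {d : ℕ} (V : EuclideanSpace ℝ (Fin d) → ℝ) (r c : ℝ)
    (hr0 : 0 ≤ r)
    (hC2 : ContDiff ℝ 2 V)
    (θstar : EuclideanSpace ℝ (Fin d)) (hmin : ∀ θ, V θstar ≤ V θ)
    (hpos : 0 < V θstar)
    (hKL : ∀ θ v, c * (V θ) ^ (-r) * ‖v‖ ^ 2 ≤ (fderiv ℝ (fderiv ℝ V) θ v) v) :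
    ∀ θ, ((1 + r) * c / 2) * ‖θ - θstar‖ ^ 2
      ≤ (V θ) ^ (1 + r) - (V θstar) ^ (1 + r) := by
  intro θ
  set u := θ - θstar
  have hV : Differentiable ℝ V := hC2.differentiable (by norm_num)
  have hDV : Differentiable ℝ (fderiv ℝ V) :=
    (hC2.fderiv_right (m := 1) (by norm_num)).differentiable (by norm_num)
  have hφ : ∀ t : ℝ, HasDerivAt (fun s : ℝ => V (θstar + s • u)) (fderiv ℝ V (θstar + t • u) u) t :=
    fun t => hasDerivAt_comp_add_smul (hV _)
  have hcrit : fderiv ℝ V (θstar + (0 : ℝ) • u) u = 0 :=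
    IsLocalMin.hasDerivAt_eq_zero
      (Filter.Eventually.of_forall fun s => by simpa using hmin (θstar + s • u)) (hφ 0)
  have := rpow_one_add_add_sq_le_of_le_deriv2 hr0 (fun t => hpos.trans_le (hmin _)) hφ
    (fun t => hasDerivAt_fderiv_comp_add_smul (hDV _)) (fun t => hKL _ u) hcrit 1
  simp only [zero_smul, add_zero, one_smul, sub_zero, one_pow, mul_one, u,
    add_sub_cancel] at this
  linarith

theorem stmt2 {d : ℕ} (V : EuclideanSpace ℝ (Fin d) → ℝ) (r c : ℝ)
    (hr0 : 0 ≤ r) (hr1 : r < 1) (hc : 0 < c)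
    (hC2 : ContDiff ℝ 2 V) (hconv : ConvexOn ℝ Set.univ V)
    (θstar : EuclideanSpace ℝ (Fin d)) (hmin : ∀ θ, V θstar ≤ V θ)
    (hpos : 0 < V θstar)
    (hKL : ∀ θ v, c * (V θ) ^ (-r) * ‖v‖ ^ 2 ≤ (fderiv ℝ (fderiv ℝ V) θ v) v) :
    ∀ θ, ((1 + r) * c / 2) * ‖θ - θstar‖ ^ 2
      ≤ (V θ) ^ (1 + r) - (V θstar) ^ (1 + r) :=
  stmt2_general V r c hr0 hC2 θstar hmin hpos hKL
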